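/- Fix W, W̃ ∈ ℂ^{n×n} and ε ≥ 0. If W̃ is a unit-circle ε-approximation of W, then for every positive integer k, C_k ⊗ W̃ is a unit-circle ε-approximation of C_k ⊗ W. -/

import Mathlib

/-! The discrete Fourier transform along the cycle coordinate diagonalises `C_k`: for a primitive
`k`-th root of unity `ζ` and `X_l = ∑_j ζ^(-lj) x_j` one has
`k · x*(C_k ⊗ A)y = ∑_l ζ^(-l) X_l* A Y_l` and `∑_l ‖X_l‖² = k ‖x‖²`. Applying the hypothesis to
each pair `(X_l, Y_l)` and the triangle inequality on both sides (the phases `ζ^(-l)` have modulus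
one) gives the inequality for `C_k ⊗ W`, multiplied by `k`. -/

open Matrix Kronecker

noncomputable section

/-- The sesquilinear form `x* A y`. -/
def sesq {m : Type*} [Fintype m] (A : Matrix m m ℂ) (x y : m → ℂ) : ℂ :=
  star x ⬝ᵥ (A *ᵥ y)

/-- The squared Euclidean norm of a complex vector. -/
def vnormSq {m : Type*} [Fintype m] (x : m → ℂ) : ℝ :=
  ∑ i, Complex.normSq (x i)

/-- `W̃` is a *unit-circle ε-approximation* of `W`. -/
def UnitCircleApprox {m : Type*} [Fintype m] (ε : ℝ) (W Wt : Matrix m m ℂ) : Prop :=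
  ∀ x y : m → ℂ,
    ‖sesq (W - Wt) x y‖ ≤
      ε / 2 * (vnormSq x + vnormSq y - ‖sesq W x x + sesq W y y‖)

/-- Transition matrix of the directed `k`-cycle (over `ℂ`):
`(C_k)_{ij} = 1` iff `i ≡ j+1 (mod k)`. -/
def cycleC (k : ℕ) : Matrix (Fin k) (Fin k) ℂ :=
  Matrix.of fun i j => if (i : ℕ) = ((j : ℕ) + 1) % k then 1 else 0

open Finset

section Sesq

variable {ι m : Type*} [Fintype ι] [Fintype m]

lemma sesq_sub (A B : Matrix m m ℂ) (x y : m → ℂ) :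
    sesq (A - B) x y = sesq A x y - sesq B x y := by
  simp only [sesq, sub_mulVec, dotProduct_sub]

lemma sesq_one_self [DecidableEq m] (x : m → ℂ) : sesq 1 x x = vnormSq x := by
  simp [sesq, vnormSq, dotProduct, Complex.normSq_eq_conj_mul_self]

lemma sesq_sum_smul (A : Matrix m m ℂ) (c d : ι → ℂ) (u v : ι → m → ℂ) :
    sesq A (∑ j, c j • u j) (∑ j', d j' • v j') =
      ∑ j, ∑ j', star (c j) * d j' * sesq A (u j) (v j') := by
  simp only [sesq, star_sum, star_smul, mulVec_sum, mulVec_smul, sum_dotProduct, dotProduct_sum,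
    smul_dotProduct, dotProduct_smul, smul_eq_mul, mul_sum]
  rw [sum_comm]
  exact sum_congr rfl fun j _ => sum_congr rfl fun j' _ => by ring

lemma sesq_kronecker (B : Matrix ι ι ℂ) (A : Matrix m m ℂ) (x y : ι × m → ℂ) :
    sesq (B ⊗ₖ A) x y =
      ∑ j, ∑ j', B j j' * sesq A (Function.curry x j) (Function.curry y j') := by
  simp only [sesq, dotProduct, mulVec, kroneckerMap_apply, Fintype.sum_prod_type,
    Function.curry_apply, Pi.star_apply, mul_sum]
  refine sum_congr rfl fun j _ => ?_
  rw [sum_comm]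
  refine sum_congr rfl fun j' _ => sum_congr rfl fun a _ => sum_congr rfl fun b _ => ?_
  ring

end Sesq

theorem UnitCircleApprox.map_of_sesq_eq_sum {ι m p : Type*} [Fintype ι] [Fintype m] [Fintype p]
    {ε κ : ℝ} (hε : 0 ≤ ε) (hκ : 0 < κ) (Φ : Matrix p p ℂ → Matrix m m ℂ)
    (T : (m → ℂ) → ι → p → ℂ) (c : ι → ℂ) (hc : ∀ l, ‖c l‖ ≤ 1)
    (hΦ : ∀ A x y, (κ : ℂ) * sesq (Φ A) x y = ∑ l, c l * sesq A (T x l) (T y l))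
    (hT : ∀ x, ∑ l, vnormSq (T x l) = κ * vnormSq x)
    {W Wt : Matrix p p ℂ} (h : UnitCircleApprox ε W Wt) :
    UnitCircleApprox ε (Φ W) (Φ Wt) := by
  have norm_sum_le (f : ι → ℂ) : ‖∑ l, c l * f l‖ ≤ ∑ l, ‖f l‖ :=
    (norm_sum_le _ _).trans <| sum_le_sum fun l _ => by
      rw [norm_mul]; exact mul_le_of_le_one_left (norm_nonneg _) (hc l)
  have norm_ofReal_mul (z : ℂ) : κ * ‖z‖ = ‖(κ : ℂ) * z‖ := by
    rw [norm_mul, Complex.norm_of_nonneg hκ.le]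
  intro x y
  set N := fun l => ‖sesq W (T x l) (T x l) + sesq W (T y l) (T y l)‖
  have hdiff : κ * ‖sesq (Φ W - Φ Wt) x y‖ ≤ ∑ l, ‖sesq (W - Wt) (T x l) (T y l)‖ := by
    have : (κ : ℂ) * sesq (Φ W - Φ Wt) x y = ∑ l, c l * sesq (W - Wt) (T x l) (T y l) := by
      simp only [sesq_sub, mul_sub, hΦ, ← sum_sub_distrib]
    exact (norm_ofReal_mul _).trans_le (this ▸ norm_sum_le _)
  have hdiag : κ * ‖sesq (Φ W) x x + sesq (Φ W) y y‖ ≤ ∑ l, N l := by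
    have : (κ : ℂ) * (sesq (Φ W) x x + sesq (Φ W) y y) =
        ∑ l, c l * (sesq W (T x l) (T x l) + sesq W (T y l) (T y l)) := by
      simp only [mul_add, hΦ, ← sum_add_distrib]
    exact (norm_ofReal_mul _).trans_le (this ▸ norm_sum_le _)
  have hsum : ∑ l, ‖sesq (W - Wt) (T x l) (T y l)‖ ≤
      ε / 2 * (κ * vnormSq x + κ * vnormSq y - ∑ l, N l) := by
    rw [← hT, ← hT, ← sum_add_distrib, ← sum_sub_distrib, mul_sum]
    exact sum_le_sum fun l _ => h (T x l) (T y l)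
  refine le_of_mul_le_mul_left ?_ hκ
  calc κ * ‖sesq (Φ W - Φ Wt) x y‖
      ≤ ε / 2 * (κ * vnormSq x + κ * vnormSq y - ∑ l, N l) := hdiff.trans hsum
    _ ≤ ε / 2 * (κ * vnormSq x + κ * vnormSq y - κ * ‖sesq (Φ W) x x + sesq (Φ W) y y‖) := by
      gcongr
    _ = κ * (ε / 2 * (vnormSq x + vnormSq y - ‖sesq (Φ W) x x + sesq (Φ W) y y‖)) := by ring

theorem IsPrimitiveRoot.sum_pow_mul_inv_pow_mul {K : Type*} [Field K] {ζ : K} {k : ℕ}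
    (hζ : IsPrimitiveRoot ζ k) (a b : ℕ) :
    ∑ l : Fin k, ζ ^ ((l : ℕ) * a) * (ζ ^ ((l : ℕ) * b))⁻¹ =
      if a ≡ b [MOD k] then (k : K) else 0 := by
  rcases Nat.eq_zero_or_pos k with rfl | hk
  · simp
  set z := ζ ^ a * (ζ ^ b)⁻¹
  have hζb : ζ ^ b ≠ 0 := pow_ne_zero _ (hζ.ne_zero hk.ne')
  have hz : z = 1 ↔ a ≡ b [MOD k] := by
    rw [mul_inv_eq_one₀ hζb, hζ.eq_orderOf, (hζ.isOfFinOrder hk.ne').pow_eq_pow_iff_modEq]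
  calc ∑ l : Fin k, ζ ^ ((l : ℕ) * a) * (ζ ^ ((l : ℕ) * b))⁻¹
      = ∑ l ∈ range k, z ^ l := by
        rw [Fin.sum_univ_eq_sum_range (fun l => ζ ^ (l * a) * (ζ ^ (l * b))⁻¹)]
        exact sum_congr rfl fun l _ => by rw [mul_pow, inv_pow, ← pow_mul, ← pow_mul,
          mul_comm a, mul_comm b]
    _ = _ := by
      split_ifs with hab
      · simp [hz.mpr hab]
      · have hzk : z ^ k = 1 := by
          rw [mul_pow, inv_pow, ← pow_mul, ← pow_mul, mul_comm a, mul_comm b, pow_mul, pow_mul,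
            hζ.pow_eq_one, one_pow, one_pow, inv_one, mul_one]
        rw [geom_sum_eq (mt hz.mp hab), hzk, sub_self, zero_div]

section CycleFourier

variable {m : Type*} [Fintype m] {k : ℕ}

def cycleFourier (ζ : ℂ) (x : Fin k × m → ℂ) (l : Fin k) : m → ℂ :=
  ∑ j : Fin k, (ζ ^ ((l : ℕ) * j))⁻¹ • Function.curry x j

lemma sum_inv_pow_mul_sesq_cycleFourier {ζ : ℂ} (hζ : IsPrimitiveRoot ζ k) (s : ℕ)
    (A : Matrix m m ℂ) (x y : Fin k × m → ℂ) :
    ∑ l : Fin k, (ζ ^ ((l : ℕ) * s))⁻¹ * sesq A (cycleFourier ζ x l) (cycleFourier ζ y l) =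
      k * ∑ j : Fin k, ∑ j' : Fin k, (if (j : ℕ) ≡ j' + s [MOD k] then 1 else 0) *
        sesq A (Function.curry x j) (Function.curry y j') := by
  rcases Nat.eq_zero_or_pos k with rfl | hk
  · simp
  have hstar (e : ℕ) : star (ζ ^ e)⁻¹ = ζ ^ e := by
    rw [Complex.inv_eq_conj (by rw [norm_pow, hζ.norm'_eq_one hk.ne', one_pow])]
    exact Complex.conj_conj _
  simp only [cycleFourier, sesq_sum_smul, hstar, mul_sum]
  rw [sum_comm]
  refine sum_congr rfl fun j _ => ?_
  rw [sum_comm]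
  refine sum_congr rfl fun j' _ => ?_
  calc _ = (∑ l : Fin k, ζ ^ ((l : ℕ) * j) * (ζ ^ ((l : ℕ) * (j' + s)))⁻¹) *
        sesq A (Function.curry x j) (Function.curry y j') := by
        rw [sum_mul]
        exact sum_congr rfl fun l _ => by rw [mul_add, pow_add, mul_inv]; ring
    _ = _ := by rw [hζ.sum_pow_mul_inv_pow_mul]; split_ifs <;> ring

lemma sum_vnormSq_cycleFourier [DecidableEq m] {ζ : ℂ} (hζ : IsPrimitiveRoot ζ k)
    (x : Fin k × m → ℂ) :
    ∑ l : Fin k, vnormSq (cycleFourier ζ x l) = k * vnormSq x := by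
  have hmodEq (j j' : Fin k) : (j : ℕ) ≡ j' + 0 [MOD k] ↔ j = j' := by
    rw [add_zero, Nat.ModEq, Nat.mod_eq_of_lt j.isLt, Nat.mod_eq_of_lt j'.isLt, Fin.val_inj]
  have := sum_inv_pow_mul_sesq_cycleFourier hζ 0 1 x x
  simp only [mul_zero, pow_zero, inv_one, one_mul, sesq_one_self, hmodEq, ite_mul, zero_mul,
    sum_ite_eq, mem_univ, if_true] at this
  have hslices : ∑ j, vnormSq (Function.curry x j) = vnormSq x := by
    rw [vnormSq, Fintype.sum_prod_type]
    rfl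
  rw [← hslices]
  exact_mod_cast this

lemma natCast_mul_sesq_kronecker_cycleC {ζ : ℂ} (hζ : IsPrimitiveRoot ζ k)
    (A : Matrix m m ℂ) (x y : Fin k × m → ℂ) :
    k * sesq (cycleC k ⊗ₖ A) x y =
      ∑ l : Fin k, (ζ ^ (l : ℕ))⁻¹ * sesq A (cycleFourier ζ x l) (cycleFourier ζ y l) := by
  have hmodEq (j j' : Fin k) : (j : ℕ) ≡ j' + 1 [MOD k] ↔ (j : ℕ) = (j' + 1) % k := by
    rw [Nat.ModEq, Nat.mod_eq_of_lt j.isLt]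
  simpa only [mul_one, hmodEq, sesq_kronecker, cycleC, of_apply] using
    (sum_inv_pow_mul_sesq_cycleFourier hζ 1 A x y).symm

end CycleFourier

/-- If `W̃ ∘≈_ε W` then for every positive integer `k`,
`C_k ⊗ W̃ ∘≈_ε C_k ⊗ W`. -/
theorem cycleLift_unitCircle_approx {n : ℕ} (ε : ℝ) (hε : 0 ≤ ε)
    (W Wt : Matrix (Fin n) (Fin n) ℂ) (h : UnitCircleApprox ε W Wt) :
    ∀ k : ℕ, 0 < k → UnitCircleApprox ε (cycleC k ⊗ₖ W) (cycleC k ⊗ₖ Wt) := by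
  intro k hk
  obtain ⟨ζ, hζ⟩ : ∃ ζ : ℂ, IsPrimitiveRoot ζ k := ⟨_, Complex.isPrimitiveRoot_exp k hk.ne'⟩
  refine UnitCircleApprox.map_of_sesq_eq_sum hε (Nat.cast_pos.mpr hk) (cycleC k ⊗ₖ ·)
    (cycleFourier ζ) (fun l => (ζ ^ (l : ℕ))⁻¹) (fun l => ?_) (fun A x y => ?_)
    (sum_vnormSq_cycleFourier hζ) h
  · simp [hζ.norm'_eq_one hk.ne']
  · exact_mod_cast natCast_mul_sesq_kronecker_cycleC hζ A x y

end
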